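/- Let Ω ⊆ ℝⁿ be a bounded open set contained in the closed ball of radius R > 0 centered at the origin, let σ : Ω → ℝ be measurable and essentially bounded, let D = esssupp(σ − 1), let ρ ∈ ℝⁿ be a unit vector, let p > 0, and let t ∈ ℝ satisfy m(D \ {x : x·ρ ≤ t}) = 0. Then for all τ > 0, ∫_Ω |σ(x) − 1| e^{pτ(x·ρ − t)} dx ≤ ‖σ − 1‖_{L^∞(Ω)} (2R)^{n−1}/(pτ); in particular this integral tends to 0 as τ → ∞. -/

import Mathlib

/-!
By Lindelöf, the open null sets defining the essential support have a countable subcover, so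
`σ - 1` vanishes almost everywhere on `Ω` outside the half-space `{x·ρ ≤ t}`. With `c = pτ`, the
integrand is therefore a.e. at most `‖σ - 1‖_∞ e^{c(x·ρ - t)}` on `B_R ∩ {x·ρ ≤ t}` and zero
elsewhere. In orthonormal coordinates whose first axis is `ρ`, that set lies in
`(-∞, t] × [-R, R]^{n-1}`, over which the exponential integrates to `(2R)^{n-1}/c`.
-/

open MeasureTheory Filter Set
open scoped RealInnerProductSpace Topology

noncomputable section

/-- The closed half-space `H_{ρ,t} = {x ∈ ℝⁿ : x·ρ ≤ t}`. -/
def halfSpace {n : ℕ} (ρ : EuclideanSpace ℝ (Fin n)) (t : ℝ) :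
    Set (EuclideanSpace ℝ (Fin n)) :=
  {x | ⟪x, ρ⟫ ≤ t}

/-- The essential support of a measurable function `f` on `Ω`: the set `Ω` minus the
union of all open sets `O ⊆ Ω` on which `f = 0` almost everywhere. -/
def essSupport {n : ℕ} (Ω : Set (EuclideanSpace ℝ (Fin n)))
    (f : EuclideanSpace ℝ (Fin n) → ℝ) : Set (EuclideanSpace ℝ (Fin n)) :=
  Ω \ ⋃ O ∈ {O : Set (EuclideanSpace ℝ (Fin n)) |
      IsOpen O ∧ O ⊆ Ω ∧ volume {x ∈ O | f x ≠ 0} = 0}, O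

theorem integrableOn_exp_mul_sub_Iic {c : ℝ} (hc : 0 < c) (t : ℝ) :
    IntegrableOn (fun s => Real.exp (c * (s - t))) (Iic t) := by
  simp_rw [mul_sub, Real.exp_sub]
  exact (integrableOn_exp_mul_Iic hc t).div_const _

theorem integral_exp_mul_sub_Iic {c : ℝ} (hc : 0 < c) (t : ℝ) :
    ∫ s in Iic t, Real.exp (c * (s - t)) = c⁻¹ := by
  simp_rw [mul_sub, Real.exp_sub]
  rw [integral_div, integral_exp_mul_Iic hc]
  field_simp

section

variable {β : Type*} [MeasureSpace β] [SFinite (volume : Measure β)]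

theorem integrableOn_exp_fst_Iic_prod {c : ℝ} (hc : 0 < c) (t : ℝ) {S : Set β}
    (hS : volume S ≠ ⊤) :
    IntegrableOn (fun z : ℝ × β => Real.exp (c * (z.1 - t))) (Iic t ×ˢ S) := by
  have : IsFiniteMeasure (volume.restrict S) := isFiniteMeasure_restrict.2 hS
  rw [IntegrableOn, Measure.volume_eq_prod, ← Measure.prod_restrict]
  exact (integrableOn_exp_mul_sub_Iic hc t).comp_fst _

theorem setIntegral_exp_fst_Iic_prod {c : ℝ} (hc : 0 < c) (t : ℝ) (S : Set β) :
    ∫ z in Iic t ×ˢ S, Real.exp (c * (z.1 - t)) = volume.real S / c := by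
  rw [Measure.volume_eq_prod, ← Measure.prod_restrict,
    integral_fun_fst (fun s => Real.exp (c * (s - t))),
    integral_exp_mul_sub_Iic hc, measureReal_restrict_apply_univ, smul_eq_mul, div_eq_mul_inv]

end

theorem exists_measurePreserving_fst_eq_inner {m : ℕ} (ρ : EuclideanSpace ℝ (Fin (m + 1)))
    (hρ : ‖ρ‖ = 1) :
    ∃ Φ : EuclideanSpace ℝ (Fin (m + 1)) ≃ᵐ ℝ × (Fin m → ℝ), MeasurePreserving Φ ∧
      ∀ x, (Φ x).1 = ⟪x, ρ⟫ ∧ ∀ j, |(Φ x).2 j| ≤ ‖x‖ := by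
  have horth : Orthonormal ℝ (({0} : Set (Fin (m + 1))).domRestrict fun _ => ρ) :=
    ⟨fun _ => hρ, fun i j hij => absurd (Subsingleton.elim i j) hij⟩
  obtain ⟨b, hb⟩ := horth.exists_orthonormalBasis_extension_of_card_eq (by simp)
  refine ⟨b.repr.toHomeomorph.toMeasurableEquiv.trans ((MeasurableEquiv.toLp 2 _).symm.trans
    (MeasurableEquiv.piFinSuccAbove (fun _ => ℝ) 0)), ?_, fun x => ⟨?_, fun j => ?_⟩⟩
  · exact ((volume_preserving_piFinSuccAbove (fun _ => ℝ) 0).comp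
      (EuclideanSpace.volume_preserving_symm_measurableEquiv_toLp _)).comp
      b.measurePreserving_repr
  · show b.repr x 0 = _
    rw [b.repr_apply_apply, hb 0 rfl, real_inner_comm]
  · show |b.repr x _| ≤ _
    rw [b.repr_apply_apply]
    simpa [b.orthonormal.1] using abs_real_inner_le_norm (b (Fin.succAbove 0 j)) x

theorem setIntegral_exp_inner_closedBall_inter_halfSpace_le {n : ℕ} {R : ℝ} (hR : 0 ≤ R)
    {ρ : EuclideanSpace ℝ (Fin n)} (hρ : ‖ρ‖ = 1) {c : ℝ} (hc : 0 < c) (t : ℝ) :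
    ∫ x in Metric.closedBall 0 R ∩ halfSpace ρ t, Real.exp (c * (⟪x, ρ⟫ - t))
      ≤ (2 * R) ^ (n - 1) / c := by
  obtain _ | m := n
  · simp [Subsingleton.elim ρ 0] at hρ
  obtain ⟨Φ, hΦ, hΦx⟩ := exists_measurePreserving_fst_eq_inner ρ hρ
  set box : Set (Fin m → ℝ) := univ.pi fun _ => Icc (-R) R
  have hbox : volume box = ENNReal.ofReal (2 * R) ^ m := by
    simp [box, Real.volume_Icc_pi, two_mul]
  have hsub : Metric.closedBall 0 R ∩ halfSpace ρ t ⊆ Φ ⁻¹' (Iic t ×ˢ box) := by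
    rintro x ⟨hxR, hxH⟩
    refine ⟨(hΦx x).1 ▸ hxH, fun j _ => abs_le.1 ((hΦx x).2 j |>.trans ?_)⟩
    simpa using hxR
  have hexp : (fun x => Real.exp (c * (⟪x, ρ⟫ - t))) =
      (fun z : ℝ × (Fin m → ℝ) => Real.exp (c * (z.1 - t))) ∘ Φ :=
    funext fun x => by simp [(hΦx x).1]
  have hint := (hΦ.integrableOn_comp_preimage Φ.measurableEmbedding).2
    (integrableOn_exp_fst_Iic_prod hc t (hbox ▸ ENNReal.pow_ne_top ENNReal.ofReal_ne_top))
  rw [hexp]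
  calc _ ≤ ∫ x in Φ ⁻¹' (Iic t ×ˢ box), ((fun z : ℝ × (Fin m → ℝ) =>
          Real.exp (c * (z.1 - t))) ∘ Φ) x :=
        setIntegral_mono_set hint (ae_of_all _ fun x => (Real.exp_pos _).le) hsub.eventuallyLE
    _ = ∫ z in Iic t ×ˢ box, Real.exp (c * (z.1 - t)) :=
        hΦ.setIntegral_preimage_emb Φ.measurableEmbedding
          (fun z : ℝ × (Fin m → ℝ) => Real.exp (c * (z.1 - t))) _
    _ = (2 * R) ^ (m + 1 - 1) / c := by
      rw [setIntegral_exp_fst_Iic_prod hc, measureReal_def, hbox, ENNReal.toReal_pow,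
        ENNReal.toReal_ofReal (by linarith), Nat.add_sub_cancel]

theorem measure_ne_zero_diff_essSupport {n : ℕ} (Ω : Set (EuclideanSpace ℝ (Fin n)))
    (f : EuclideanSpace ℝ (Fin n) → ℝ) :
    volume ({x ∈ Ω | f x ≠ 0} \ essSupport Ω f) = 0 := by
  obtain ⟨T, hTS, hT, hTU⟩ := TopologicalSpace.isOpen_biUnion_countable
    {O | IsOpen O ∧ O ⊆ Ω ∧ volume {x ∈ O | f x ≠ 0} = 0} id fun O hO => hO.1
  refine measure_mono_null ?_ ((measure_biUnion_null_iff hT).2 fun O hO => (hTS hO).2.2)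
  rintro x ⟨⟨hxΩ, hfx⟩, hxD⟩
  have hxU : x ∈ ⋃ O ∈ T, id O := by
    rw [hTU]
    by_contra hxU
    exact hxD ⟨hxΩ, hxU⟩
  obtain ⟨O, hO, hxO⟩ := mem_iUnion₂.1 hxU
  exact mem_iUnion₂.2 ⟨O, hO, hxO, hfx⟩

theorem ae_restrict_mem_of_ne_zero_of_measure_essSupport_diff {n : ℕ}
    {Ω : Set (EuclideanSpace ℝ (Fin n))} (hΩ : MeasurableSet Ω)
    {f : EuclideanSpace ℝ (Fin n) → ℝ} {A : Set (EuclideanSpace ℝ (Fin n))}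
    (hA : volume (essSupport Ω f \ A) = 0) :
    ∀ᵐ x ∂volume.restrict Ω, f x ≠ 0 → x ∈ A := by
  rw [ae_restrict_iff' hΩ, ae_iff]
  refine measure_mono_null ?_ (measure_union_null (measure_ne_zero_diff_essSupport Ω f) hA)
  intro x hx
  simp only [Classical.not_imp] at hx
  obtain ⟨hxΩ, hfx, hxA⟩ := hx
  by_cases hxD : x ∈ essSupport Ω f
  · exact Or.inr ⟨hxD, hxA⟩
  · exact Or.inl ⟨⟨hxΩ, hfx⟩, hxD⟩

theorem ae_norm_le_toReal_eLpNormEssSup {α E : Type*} [MeasurableSpace α] {μ : Measure α}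
    [NormedAddCommGroup E] {f : α → E} (hf : eLpNormEssSup f μ ≠ ⊤) :
    ∀ᵐ x ∂μ, ‖f x‖ ≤ (eLpNormEssSup f μ).toReal := by
  filter_upwards [ae_le_eLpNormEssSup (f := f) (μ := μ)] with x hx
  simpa using ENNReal.toReal_mono hf hx

theorem setIntegral_abs_mul_exp_inner_le {n : ℕ} {Ω : Set (EuclideanSpace ℝ (Fin n))} {R : ℝ}
    (hR : 0 ≤ R) (hΩR : Ω ⊆ Metric.closedBall 0 R)
    {ρ : EuclideanSpace ℝ (Fin n)} (hρ : ‖ρ‖ = 1) {t M c : ℝ} (hM : 0 ≤ M) (hc : 0 < c)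
    {g : EuclideanSpace ℝ (Fin n) → ℝ} (hgM : ∀ᵐ x ∂volume.restrict Ω, |g x| ≤ M)
    (hg : ∀ᵐ x ∂volume.restrict Ω, g x ≠ 0 → x ∈ halfSpace ρ t) :
    ∫ x in Ω, |g x| * Real.exp (c * (⟪x, ρ⟫ - t)) ≤ M * ((2 * R) ^ (n - 1) / c) := by
  set e := fun x : EuclideanSpace ℝ (Fin n) => Real.exp (c * (⟪x, ρ⟫ - t))
  have he : IntegrableOn e (Metric.closedBall 0 R) :=
    ContinuousOn.integrableOn_compact (isCompact_closedBall 0 R) (by fun_prop)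
  have hH : MeasurableSet (halfSpace ρ t) :=
    (isClosed_le (by fun_prop) continuous_const).measurableSet
  have he0 : ∀ x, 0 ≤ (halfSpace ρ t).indicator e x :=
    indicator_nonneg fun x _ => (Real.exp_pos _).le
  calc ∫ x in Ω, |g x| * e x ≤ ∫ x in Ω, M * (halfSpace ρ t).indicator e x := by
        refine integral_mono_of_nonneg (ae_of_all _ fun x => by positivity)
          (((he.mono_set hΩR).indicator hH).const_mul M) ?_
        filter_upwards [hgM, hg] with x hxM hxH
        by_cases hgx : g x = 0
        · simpa [hgx] using mul_nonneg hM (he0 x)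
        · rw [indicator_of_mem (hxH hgx)]
          exact mul_le_mul_of_nonneg_right hxM (Real.exp_pos _).le
    _ = M * ∫ x in Ω ∩ halfSpace ρ t, e x := by
        rw [integral_const_mul, setIntegral_indicator hH]
    _ ≤ M * ∫ x in Metric.closedBall 0 R ∩ halfSpace ρ t, e x :=
        mul_le_mul_of_nonneg_left (setIntegral_mono_set (he.mono_set inter_subset_left)
          (ae_of_all _ fun x => (Real.exp_pos _).le)
          (inter_subset_inter_left _ hΩR).eventuallyLE) hM
    _ ≤ M * ((2 * R) ^ (n - 1) / c) :=
        mul_le_mul_of_nonneg_left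
          (setIntegral_exp_inner_closedBall_inter_halfSpace_le hR hρ hc t) hM

theorem indicator_integral_decay_general {n : ℕ} (Ω : Set (EuclideanSpace ℝ (Fin n)))
    (hΩo : IsOpen Ω)
    (R : ℝ) (hR : 0 < R) (hΩR : Ω ⊆ Metric.closedBall 0 R)
    (σ : EuclideanSpace ℝ (Fin n) → ℝ)
    (hσbd : eLpNormEssSup (fun x => σ x - 1) (volume.restrict Ω) ≠ ⊤)
    (ρ : EuclideanSpace ℝ (Fin n)) (hρ : ‖ρ‖ = 1) (p : ℝ) (hp : 0 < p) (t : ℝ)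
    (ht : volume (essSupport Ω (fun x => σ x - 1) \ halfSpace ρ t) = 0) :
    (∀ τ : ℝ, 0 < τ →
      (∫ x in Ω, |σ x - 1| * Real.exp (p * τ * (⟪x, ρ⟫ - t)))
        ≤ (eLpNormEssSup (fun x => σ x - 1) (volume.restrict Ω)).toReal *
            ((2 * R) ^ (n - 1) / (p * τ))) ∧
    Tendsto (fun τ : ℝ => ∫ x in Ω, |σ x - 1| * Real.exp (p * τ * (⟪x, ρ⟫ - t)))
      atTop (𝓝 0) := by
  set M := (eLpNormEssSup (fun x => σ x - 1) (volume.restrict Ω)).toReal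
  have hbound : ∀ τ : ℝ, 0 < τ →
      (∫ x in Ω, |σ x - 1| * Real.exp (p * τ * (⟪x, ρ⟫ - t)))
        ≤ M * ((2 * R) ^ (n - 1) / (p * τ)) := fun τ hτ =>
    setIntegral_abs_mul_exp_inner_le hR.le hΩR hρ ENNReal.toReal_nonneg
      (mul_pos hp hτ) (ae_norm_le_toReal_eLpNormEssSup hσbd)
      (ae_restrict_mem_of_ne_zero_of_measure_essSupport_diff hΩo.measurableSet ht)
  have hupper : Tendsto (fun τ : ℝ => M * ((2 * R) ^ (n - 1) / (p * τ))) atTop (𝓝 0) := by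
    simpa using (tendsto_const_nhds.div_atTop
      (tendsto_id.const_mul_atTop hp)).const_mul M
  refine ⟨hbound, tendsto_of_tendsto_of_tendsto_of_le_of_le' tendsto_const_nhds hupper
    (Eventually.of_forall fun τ => integral_nonneg fun x => by positivity) ?_⟩
  filter_upwards [eventually_gt_atTop 0] with τ hτ using hbound τ hτ

/-- If `m(D \ H_{ρ,t}) = 0`, where `D = esssupp(σ − 1)`, then for all `τ > 0`,
`∫_Ω |σ − 1| e^{pτ(x·ρ − t)} dx ≤ ‖σ − 1‖_{L^∞(Ω)} (2R)^{n−1}/(pτ)`, so the integral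
tends to `0` as `τ → ∞`. -/
theorem indicator_integral_decay {n : ℕ} (Ω : Set (EuclideanSpace ℝ (Fin n)))
    (hΩo : IsOpen Ω) (hΩb : Bornology.IsBounded Ω)
    (R : ℝ) (hR : 0 < R) (hΩR : Ω ⊆ Metric.closedBall 0 R)
    (σ : EuclideanSpace ℝ (Fin n) → ℝ) (hσm : Measurable σ)
    (hσbd : eLpNormEssSup (fun x => σ x - 1) (volume.restrict Ω) ≠ ⊤)
    (ρ : EuclideanSpace ℝ (Fin n)) (hρ : ‖ρ‖ = 1) (p : ℝ) (hp : 0 < p) (t : ℝ)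
    (ht : volume (essSupport Ω (fun x => σ x - 1) \ halfSpace ρ t) = 0) :
    (∀ τ : ℝ, 0 < τ →
      (∫ x in Ω, |σ x - 1| * Real.exp (p * τ * (⟪x, ρ⟫ - t)))
        ≤ (eLpNormEssSup (fun x => σ x - 1) (volume.restrict Ω)).toReal *
            ((2 * R) ^ (n - 1) / (p * τ))) ∧
    Tendsto (fun τ : ℝ => ∫ x in Ω, |σ x - 1| * Real.exp (p * τ * (⟪x, ρ⟫ - t)))
      atTop (𝓝 0) :=
  indicator_integral_decay_general Ω hΩo R hR hΩR σ hσbd ρ hρ p hp t ht
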